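/- (Relation to optimistic fixed-length source coding.) For any general source X, any R ≥ 0, and any ε, δ ∈ [0,1) satisfying ε + δ < 1, it holds that R*(ε,δ|X) = R^f(ε+δ|X) = H̄*_{ε+δ}(X) and L*(ε,δ,R|X) = L^f(ε+δ,R|X) = H̄*_{ε+δ}(R|X). -/

import Mathlib

open Filter MeasureTheory

namespace NY

/-- A probability distribution on a set, given by its point mass function. -/
structure Dist (α : Type*) where
  p : α → ℝ
  nonneg : ∀ x, 0 ≤ p x
  hasSum : HasSum p 1

/-- The probability of a set under a distribution. -/
noncomputable def Dist.pr {α : Type*} (P : Dist α) (A : Set α) : ℝ := ∑' x : A, P.p x.1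

/-- 𝒰* : nonempty finite strings over the code alphabet 𝒰 = {1,…,K}. -/
abbrev Word (K : ℕ) := {u : List (Fin K) // u ≠ []}

/-- Length of a string, as a real number. -/
noncomputable def wlen {K : ℕ} (u : Word K) : ℝ := u.1.length

/-- Error probability of a variable-length code (φ, ψ). -/
noncomputable def errP {α : Type*} {K : ℕ} (P : Dist α) (φ : α → Word K) (ψ : Word K → α) : ℝ :=
  P.pr {x | ψ (φ x) ≠ x}

/-- Overflow probability of an encoder φ with threshold η. -/
noncomputable def ovP {α : Type*} {K : ℕ} (P : Dist α) (φ : α → Word K) (η : ℝ) : ℝ :=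
  P.pr {x | wlen (φ x) > η}

/-- A general source: for each blocklength n, a distribution on 𝒳^n. -/
abbrev Source (𝒳 : Type*) := (n : ℕ) → Dist (Fin n → 𝒳)

/-- The limit as ν ↓ 0 of a function g which is nonincreasing in ν
(the limit exists by monotonicity and equals the supremum over ν > 0). -/
noncomputable def limNu (g : ℝ → ℝ) : ℝ := sSup (g '' Set.Ioi (0 : ℝ))

variable {𝒳 : Type*}

/-- A rate R ≥ 0 is (ε,δ)-achievable. -/
def FirstAch (K : ℕ) (X : Source 𝒳) (ε δ R : ℝ) : Prop :=
  0 ≤ R ∧ ∃ (φ : ∀ n, (Fin n → 𝒳) → Word K) (ψ : ∀ n, Word K → (Fin n → 𝒳)),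
    limsup (fun n => errP (X n) (φ n) (ψ n)) atTop ≤ ε ∧
    limsup (fun n => ovP (X n) (φ n) ((n : ℝ) * R)) atTop ≤ δ

/-- The first-order (ε,δ)-optimum threshold R(ε,δ|X). -/
noncomputable def Ropt (K : ℕ) (X : Source 𝒳) (ε δ : ℝ) : ℝ :=
  sInf {R | FirstAch K X ε δ R}

/-- L is (ε,δ,R)-achievable (second order). -/
def SecondAch (K : ℕ) (X : Source 𝒳) (ε δ R L : ℝ) : Prop :=
  ∃ (φ : ∀ n, (Fin n → 𝒳) → Word K) (ψ : ∀ n, Word K → (Fin n → 𝒳)),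
    limsup (fun n => errP (X n) (φ n) (ψ n)) atTop ≤ ε ∧
    limsup (fun n => ovP (X n) (φ n) ((n : ℝ) * R + Real.sqrt (n : ℝ) * L)) atTop ≤ δ

/-- The second-order (ε,δ,R)-optimum threshold L(ε,δ,R|X). -/
noncomputable def Lopt (K : ℕ) (X : Source 𝒳) (ε δ R : ℝ) : ℝ :=
  sInf {L | SecondAch K X ε δ R L}

/-- A rate R ≥ 0 is optimistically (ε,δ)-achievable. -/
def OptFirstAch (K : ℕ) (X : Source 𝒳) (ε δ R : ℝ) : Prop :=
  0 ≤ R ∧ ∃ (φ : ∀ n, (Fin n → 𝒳) → Word K) (ψ : ∀ n, Word K → (Fin n → 𝒳)),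
    ∀ γ > (0 : ℝ), ∃ ns : ℕ → ℕ, StrictMono ns ∧ ∀ i,
      errP (X (ns i)) (φ (ns i)) (ψ (ns i)) ≤ ε + γ ∧
      ovP (X (ns i)) (φ (ns i)) ((ns i : ℝ) * R) ≤ δ + γ

/-- The optimistic first-order (ε,δ)-optimum threshold R*(ε,δ|X). -/
noncomputable def RoptStar (K : ℕ) (X : Source 𝒳) (ε δ : ℝ) : ℝ :=
  sInf {R | OptFirstAch K X ε δ R}

/-- L is optimistically (ε,δ,R)-achievable. -/
def OptSecondAch (K : ℕ) (X : Source 𝒳) (ε δ R L : ℝ) : Prop :=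
  ∃ (φ : ∀ n, (Fin n → 𝒳) → Word K) (ψ : ∀ n, Word K → (Fin n → 𝒳)),
    ∀ γ > (0 : ℝ), ∃ ns : ℕ → ℕ, StrictMono ns ∧ ∀ i,
      errP (X (ns i)) (φ (ns i)) (ψ (ns i)) ≤ ε + γ ∧
      ovP (X (ns i)) (φ (ns i)) ((ns i : ℝ) * R + Real.sqrt (ns i : ℝ) * L) ≤ δ + γ

/-- The optimistic second-order (ε,δ,R)-optimum threshold L*(ε,δ,R|X). -/
noncomputable def LoptStar (K : ℕ) (X : Source 𝒳) (ε δ R : ℝ) : ℝ :=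
  sInf {L | OptSecondAch K X ε δ R L}

/-- A rate R ≥ 0 is type I (ε,δ)-achievable. -/
def TypeIAch (K : ℕ) (X : Source 𝒳) (ε δ R : ℝ) : Prop :=
  0 ≤ R ∧ ∃ (φ : ∀ n, (Fin n → 𝒳) → Word K) (ψ : ∀ n, Word K → (Fin n → 𝒳)),
    limsup (fun n => errP (X n) (φ n) (ψ n)) atTop ≤ ε ∧
    liminf (fun n => ovP (X n) (φ n) ((n : ℝ) * R)) atTop ≤ δ

/-- R†(ε,δ|X). -/
noncomputable def Rdagger (K : ℕ) (X : Source 𝒳) (ε δ : ℝ) : ℝ :=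
  sInf {R | TypeIAch K X ε δ R}

/-- A rate R ≥ 0 is type II (ε,δ)-achievable. -/
def TypeIIAch (K : ℕ) (X : Source 𝒳) (ε δ R : ℝ) : Prop :=
  0 ≤ R ∧ ∃ (φ : ∀ n, (Fin n → 𝒳) → Word K) (ψ : ∀ n, Word K → (Fin n → 𝒳)),
    liminf (fun n => errP (X n) (φ n) (ψ n)) atTop ≤ ε ∧
    limsup (fun n => ovP (X n) (φ n) ((n : ℝ) * R)) atTop ≤ δ

/-- R‡(ε,δ|X). -/
noncomputable def Rddagger (K : ℕ) (X : Source 𝒳) (ε δ : ℝ) : ℝ :=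
  sInf {R | TypeIIAch K X ε δ R}

/-- H̄_γ(X) := inf{ R : limsup_n Pr{ (1/n) log(1/P_{X^n}(X^n)) > R } ≤ γ }. -/
noncomputable def Hbar (K : ℕ) (X : Source 𝒳) (γ : ℝ) : ℝ :=
  sInf {R | limsup (fun n =>
    (X n).pr {x | Real.logb (K : ℝ) (1 / (X n).p x) / (n : ℝ) > R}) atTop ≤ γ}

/-- H̄*_γ(X) (optimistic version, with liminf). -/
noncomputable def HbarStar (K : ℕ) (X : Source 𝒳) (γ : ℝ) : ℝ :=
  sInf {R | liminf (fun n =>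
    (X n).pr {x | Real.logb (K : ℝ) (1 / (X n).p x) / (n : ℝ) > R}) atTop ≤ γ}

/-- H̄_γ(R|X) := inf{ L : limsup_n Pr{ (1/n) log(1/P_{X^n}(X^n)) > R + L/√n } ≤ γ }. -/
noncomputable def Hbar2 (K : ℕ) (X : Source 𝒳) (γ R : ℝ) : ℝ :=
  sInf {L | limsup (fun n =>
    (X n).pr {x | Real.logb (K : ℝ) (1 / (X n).p x) / (n : ℝ)
      > R + L / Real.sqrt (n : ℝ)}) atTop ≤ γ}

/-- H̄*_γ(R|X) (optimistic version, with liminf). -/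
noncomputable def Hbar2Star (K : ℕ) (X : Source 𝒳) (γ R : ℝ) : ℝ :=
  sInf {L | liminf (fun n =>
    (X n).pr {x | Real.logb (K : ℝ) (1 / (X n).p x) / (n : ℝ)
      > R + L / Real.sqrt (n : ℝ)}) atTop ≤ γ}

/-- F(ε,R) := limsup_n inf_{A : Pr(A) ≥ 1−ε} Pr{ −(1/n) log P_{X^n}(X^n) ≥ R, X^n ∈ A }. -/
noncomputable def Fspec (K : ℕ) (X : Source 𝒳) (ε R : ℝ) : ℝ :=
  limsup (fun n =>
    sInf ((fun A : Set (Fin n → 𝒳) =>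
        (X n).pr (A ∩ {x | -Real.logb (K : ℝ) ((X n).p x) / (n : ℝ) ≥ R})) ''
      {A | (X n).pr A ≥ 1 - ε})) atTop

/-- H̃_{ε,δ}(X) := inf{ R : F(ε,R) ≤ δ }. -/
noncomputable def Htilde (K : ℕ) (X : Source 𝒳) (ε δ : ℝ) : ℝ :=
  sInf {R | Fspec K X ε R ≤ δ}

/-- G_{ε,δ}(X). -/
noncomputable def Gfirst (K : ℕ) (X : Source 𝒳) (ε δ : ℝ) : ℝ :=
  sInf {R | limNu (fun ν => limsup (fun n =>
    sInf ((fun A : Set (Fin n → 𝒳) =>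
        (X n).pr (A ∩ {x | -Real.logb (K : ℝ) ((X n).p x / (X n).pr A) / (n : ℝ) ≥ R})) ''
      {A | (X n).pr A ≥ 1 - ε - ν})) atTop) ≤ δ}

/-- G*_{ε,δ}(X) (optimistic version, with liminf). -/
noncomputable def GfirstStar (K : ℕ) (X : Source 𝒳) (ε δ : ℝ) : ℝ :=
  sInf {R | limNu (fun ν => liminf (fun n =>
    sInf ((fun A : Set (Fin n → 𝒳) =>
        (X n).pr (A ∩ {x | -Real.logb (K : ℝ) ((X n).p x / (X n).pr A) / (n : ℝ) ≥ R})) ''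
      {A | (X n).pr A ≥ 1 - ε - ν})) atTop) ≤ δ}

/-- G_{ε,δ}(R|X). -/
noncomputable def Gsecond (K : ℕ) (X : Source 𝒳) (ε δ R : ℝ) : ℝ :=
  sInf {L | limNu (fun ν => limsup (fun n =>
    sInf ((fun A : Set (Fin n → 𝒳) =>
        (X n).pr (A ∩ {x | -Real.logb (K : ℝ) ((X n).p x / (X n).pr A) / (n : ℝ)
          ≥ R + L / Real.sqrt (n : ℝ)})) ''
      {A | (X n).pr A ≥ 1 - ε - ν})) atTop) ≤ δ}

/-- G*_{ε,δ}(R|X) (optimistic version, with liminf). -/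
noncomputable def GsecondStar (K : ℕ) (X : Source 𝒳) (ε δ R : ℝ) : ℝ :=
  sInf {L | limNu (fun ν => liminf (fun n =>
    sInf ((fun A : Set (Fin n → 𝒳) =>
        (X n).pr (A ∩ {x | -Real.logb (K : ℝ) ((X n).p x / (X n).pr A) / (n : ℝ)
          ≥ R + L / Real.sqrt (n : ℝ)})) ''
      {A | (X n).pr A ≥ 1 - ε - ν})) atTop) ≤ δ}

/-- A rate R is optimistically ε-achievable by fixed-length codes. -/
def FixAchR (K : ℕ) (X : Source 𝒳) (ε R : ℝ) : Prop :=
  ∃ (M : ℕ → ℕ) (φ : ∀ n, (Fin n → 𝒳) → Fin (M n)) (ψ : ∀ n, Fin (M n) → (Fin n → 𝒳)),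
    ∀ γ > (0 : ℝ), ∃ ns : ℕ → ℕ, StrictMono ns ∧ ∀ i,
      (X (ns i)).pr {x | ψ (ns i) (φ (ns i) x) ≠ x} ≤ ε + γ ∧
      Real.logb (K : ℝ) (M (ns i) : ℝ) / (ns i : ℝ) ≤ R + γ

/-- R^f(ε|X). -/
noncomputable def Rfix (K : ℕ) (X : Source 𝒳) (ε : ℝ) : ℝ :=
  sInf {R | FixAchR K X ε R}

/-- A real L is optimistically (ε,R)-achievable by fixed-length codes. -/
def FixAchL (K : ℕ) (X : Source 𝒳) (ε R L : ℝ) : Prop :=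
  ∃ (M : ℕ → ℕ) (φ : ∀ n, (Fin n → 𝒳) → Fin (M n)) (ψ : ∀ n, Fin (M n) → (Fin n → 𝒳)),
    ∀ γ > (0 : ℝ), ∃ ns : ℕ → ℕ, StrictMono ns ∧ ∀ i,
      (X (ns i)).pr {x | ψ (ns i) (φ (ns i) x) ≠ x} ≤ ε + γ ∧
      Real.logb (K : ℝ) ((M (ns i) : ℝ) / (K : ℝ) ^ ((ns i : ℝ) * R)) / Real.sqrt (ns i : ℝ)
        ≤ L + γ

/-- L^f(ε,R|X). -/
noncomputable def Lfix (K : ℕ) (X : Source 𝒳) (ε R : ℝ) : ℝ :=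
  sInf {L | FixAchL K X ε R L}

/-!
Everything is compared with the information spectrum `Pr{-log_K P(X^n) > θ}`.

Converse: a code that decodes correctly using codewords of length at most `η` (or at most `M`
codewords) can serve at most `K^(η+1)` (or `M`) sequences, so outside the error and overflow
events the sequences of probability below `K^(-θ)` carry mass at most `K^(η+1-θ)` (or
`M K^(-θ)`), which vanishes once `θ - η → ∞`.

Direct part: the at most `K^L` sequences of probability at least `K^(-L)` get distinct
codewords of length `L + 1`. For a fixed-length code the others are decoding errors. For a
variable-length code, an initial part of them of mass at most `ε` is given up to decoding
error and the rest, of mass at most the spectrum minus `ε` plus one atom, is encoded injectively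
with long codewords and overflows.

Raising the parameter by `γ` moves the threshold `n R` by `n γ`, and `n R + √n L` by `√n γ`;
either way this absorbs the constant losses above, so the achievable parameters and the
spectral ones agree up to arbitrarily small shifts and have the same infimum.
-/

open Topology

lemma liminf_le_of_frequently_le_add {ι : Type*} {l : Filter ι} {u w : ι → ℝ} {g : ℝ}
    (hu : IsBoundedUnder (· ≥ ·) l u) (hw : Tendsto w l (𝓝 0)) (h : ∃ᶠ i in l, u i ≤ g + w i) :
    liminf u l ≤ g :=
  le_of_forall_pos_le_add fun _ hτ => liminf_le_of_frequently_le
    ((h.and_eventually (hw.eventually (gt_mem_nhds hτ))).mono fun _ hi => by linarith [hi.1, hi.2])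
    hu

lemma tendsto_rpow_mul_rpow_neg {K : ℝ} (hK : 1 < K) {ι : Type*} {l : Filter ι} {a b : ι → ℝ}
    (hab : Tendsto (fun i => b i - a i) l atTop) :
    Tendsto (fun i => K ^ a i * K ^ (-b i)) l (𝓝 0) := by
  refine ((tendsto_rpow_atBot_of_base_gt_one K hK).comp
    (tendsto_neg_atTop_atBot.comp hab)).congr fun i => ?_
  rw [Function.comp_apply, Function.comp_apply, ← Real.rpow_add (by linarith)]
  ring_nf

lemma sInf_eq_of_forall_add_mem {S T : Set ℝ} (hST : ∀ s ∈ S, ∀ γ > (0 : ℝ), s + γ ∈ T)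
    (hTS : ∀ t ∈ T, ∀ γ > (0 : ℝ), t + γ ∈ S) : sInf S = sInf T := by
  have key : ∀ {S T : Set ℝ}, (∀ t ∈ T, ∀ γ > (0 : ℝ), t + γ ∈ S) →
      lowerBounds S ⊆ lowerBounds T :=
    fun hTS b hb t ht => le_of_forall_pos_le_add fun γ hγ => hb (hTS t ht γ hγ)
  have hlb : lowerBounds S = lowerBounds T := (key hTS).antisymm (key hST)
  rcases S.eq_empty_or_nonempty with rfl | hS
  · rw [Set.eq_empty_of_forall_notMem fun t ht => (hTS t ht 1 one_pos).elim]
  have hT : T.Nonempty := let ⟨s, hs⟩ := hS; ⟨s + 1, hST s hs 1 one_pos⟩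
  by_cases hb : BddBelow S
  · have hb' : BddBelow T := by rwa [BddBelow, ← hlb]
    exact (isGLB_csInf hS hb).unique (by rw [IsGLB, hlb]; exact isGLB_csInf hT hb')
  · have hb' : ¬BddBelow T := by rwa [BddBelow, ← hlb]
    rw [Real.sInf_of_not_bddBelow hb, Real.sInf_of_not_bddBelow hb']

lemma frequently_atTop_iff_exists_strictMono {P : ℕ → Prop} :
    (∃ᶠ n in atTop, P n) ↔ ∃ ns : ℕ → ℕ, StrictMono ns ∧ ∀ i, P (ns i) :=
  ⟨extraction_of_frequently_atTop,
    fun ⟨_, hns, hP⟩ => hns.tendsto_atTop.frequently (Frequently.of_forall hP)⟩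

namespace Dist

variable {α : Type*} (P : Dist α)

lemma pr_eq_tsum_indicator (A : Set α) : P.pr A = ∑' x, A.indicator P.p x := tsum_subtype A P.p

lemma pr_coe_finset (s : Finset α) : P.pr s = ∑ x ∈ s, P.p x := Finset.tsum_subtype' s P.p

lemma summable_indicator (A : Set α) : Summable (A.indicator P.p) :=
  P.hasSum.summable.indicator A

lemma pr_nonneg (A : Set α) : 0 ≤ P.pr A := tsum_nonneg fun x => P.nonneg x

lemma pr_mono {A B : Set α} (h : A ⊆ B) : P.pr A ≤ P.pr B := by
  simp only [pr_eq_tsum_indicator]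
  exact (P.summable_indicator A).tsum_le_tsum
    (Set.indicator_le_indicator_of_subset h P.nonneg) (P.summable_indicator B)

lemma pr_empty : P.pr ∅ = 0 := by simp [pr_eq_tsum_indicator]

lemma pr_univ : P.pr Set.univ = 1 := by
  rw [pr_eq_tsum_indicator, Set.indicator_univ, P.hasSum.tsum_eq]

lemma pr_le_one (A : Set α) : P.pr A ≤ 1 := P.pr_univ ▸ P.pr_mono A.subset_univ

lemma pr_union_add_pr_inter (A B : Set α) :
    P.pr (A ∪ B) + P.pr (A ∩ B) = P.pr A + P.pr B := by
  simp only [pr_eq_tsum_indicator,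
    ← (P.summable_indicator _).tsum_add (P.summable_indicator _)]
  exact tsum_congr (Set.indicator_union_add_inter_apply P.p A B)

lemma pr_union_le (A B : Set α) : P.pr (A ∪ B) ≤ P.pr A + P.pr B := by
  linarith [P.pr_union_add_pr_inter A B, P.pr_nonneg (A ∩ B)]

lemma pr_diff {A B : Set α} (h : A ⊆ B) : P.pr (B \ A) = P.pr B - P.pr A := by
  have := P.pr_union_add_pr_inter A (B \ A)
  rw [Set.union_sdiff_cancel h, Set.inter_sdiff_self, pr_empty] at this
  linarith

lemma pr_singleton (a : α) : P.pr {a} = P.p a := tsum_singleton a P.p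

lemma p_le_one (a : α) : P.p a ≤ 1 := P.pr_singleton a ▸ P.pr_le_one {a}

lemma pr_congr {A B : Set α} (h : ∀ x, P.p x ≠ 0 → (x ∈ A ↔ x ∈ B)) : P.pr A = P.pr B := by
  classical
  simp only [pr_eq_tsum_indicator]
  refine tsum_congr fun x => ?_
  by_cases hx : P.p x = 0
  · simp [Set.indicator_apply, hx]
  · simp only [Set.indicator_apply, h x hx]

lemma pr_le_of_forall_finset {A : Set α} {a : ℝ} (h : ∀ s : Finset α, ↑s ⊆ A → P.pr s ≤ a) :
    P.pr A ≤ a := by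
  classical
  rw [pr_eq_tsum_indicator]
  refine (P.summable_indicator A).tsum_le_of_sum_le fun s => ?_
  calc ∑ x ∈ s, A.indicator P.p x = P.pr ↑(s.filter (· ∈ A)) := by
        rw [pr_coe_finset, Finset.sum_filter]; rfl
    _ ≤ a := h _ fun x hx => (Finset.mem_filter.1 hx).2

lemma nonempty (P : Dist α) : Nonempty α := by
  by_contra h
  rw [not_nonempty_iff] at h
  simpa using P.hasSum.unique hasSum_empty

lemma card_mul_le_one {s : Finset α} {c : ℝ} (hs : ∀ x ∈ s, c ≤ P.p x) : s.card * c ≤ 1 :=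
  calc s.card * c = s.card • c := (nsmul_eq_mul _ _).symm
    _ ≤ ∑ x ∈ s, P.p x := s.card_nsmul_le_sum _ _ hs
    _ ≤ 1 := P.hasSum.tsum_eq ▸ P.hasSum.summable.sum_le_tsum s fun x _ => P.nonneg x

lemma encard_setOf_inv_le_le {M : ℕ} (hM : 0 < M) : {x | (M : ℝ)⁻¹ ≤ P.p x}.encard ≤ M := by
  by_contra! h
  obtain ⟨t, hts, ht⟩ := Set.exists_subset_encard_eq (Order.add_one_le_of_lt h)
  lift t to Finset α using Set.finite_of_encard_eq_coe ht
  rw [Set.encard_coe_eq_coe_finsetCard] at ht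
  have hcard : t.card = M + 1 := by exact_mod_cast ht
  have := P.card_mul_le_one hts
  rw [hcard, Nat.cast_succ, add_mul, mul_inv_cancel₀ (by positivity)] at this
  linarith [show (0 : ℝ) < (M : ℝ)⁻¹ by positivity]

lemma pr_le_card_mul {β : Type*} {f : α → β} {A : Set α} {T : Finset β} {c : ℝ}
    (hinj : A.InjOn f) (hmaps : A.MapsTo f T) (hc : ∀ x ∈ A, P.p x ≤ c) (hc0 : 0 ≤ c) :
    P.pr A ≤ T.card * c := by
  lift A to Finset α using (T.finite_toSet.subset hmaps.image_subset).of_finite_image hinj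
  rw [pr_coe_finset]
  calc ∑ x ∈ A, P.p x ≤ A.card • c := Finset.sum_le_card_nsmul _ _ _ hc
    _ = A.card * c := nsmul_eq_mul _ _
    _ ≤ T.card * c := by gcongr; exact Finset.card_le_card_of_injOn f hmaps hinj

lemma pos_of_encoder (P : Dist α) {M : ℕ} (φ : α → Fin M) : 0 < M :=
  have := P.nonempty
  (φ (Classical.arbitrary α)).pos

/-- The probability that the self-information `-log_K P(x)` exceeds `θ`. -/
noncomputable def infoTail (K : ℕ) (θ : ℝ) : ℝ := P.pr {x | P.p x < (K : ℝ) ^ (-θ)}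

variable {K : ℕ}

lemma infoTail_anti (hK : 1 ≤ K) {θ θ' : ℝ} (h : θ ≤ θ') : P.infoTail K θ' ≤ P.infoTail K θ :=
  P.pr_mono fun _ hx =>
    hx.trans_le (Real.rpow_le_rpow_of_exponent_le (by exact_mod_cast hK) (neg_le_neg h))

lemma nonneg_of_infoTail_lt_one (hK : 1 < K) {θ : ℝ} (h : P.infoTail K θ < 1) : 0 ≤ θ := by
  by_contra! hθ
  have huniv : {x | P.p x < (K : ℝ) ^ (-θ)} = Set.univ := Set.eq_univ_of_forall fun x =>
    (P.p_le_one x).trans_lt (Real.one_lt_rpow (by exact_mod_cast hK) (by linarith))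
  rw [infoTail, huniv, pr_univ] at h
  exact h.false

lemma infoTail_natCast (L : ℕ) : P.infoTail K L = P.pr {x | P.p x < ((K : ℝ) ^ L)⁻¹} := by
  rw [infoTail, Real.rpow_neg (Nat.cast_nonneg K), Real.rpow_natCast]

lemma pr_logb_div_gt (hK : 1 < K) {n : ℕ} (hn : 0 < n) (t : ℝ) :
    P.pr {x | Real.logb K (1 / P.p x) / n > t} = P.infoTail K (n * t) := by
  refine P.pr_congr fun x hx => ?_
  have hp : 0 < P.p x := (P.nonneg x).lt_of_ne' hx
  have hK' : (1 : ℝ) < K := by exact_mod_cast hK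
  simp only [Set.mem_ofPred_eq, gt_iff_lt, lt_div_iff₀ (by positivity : (0 : ℝ) < n)]
  rw [mul_comm, Real.lt_logb_iff_rpow_lt hK' (by positivity), Real.rpow_neg (by positivity),
    one_div, lt_inv_comm₀ (by positivity) hp]

end Dist

lemma one_le_wlen {K : ℕ} (u : Word K) : 1 ≤ wlen u := by
  simpa [wlen, Nat.one_le_iff_ne_zero] using u.2

section Overflow

variable {α : Type*} {K : ℕ} (P : Dist α) (φ : α → Word K)

lemma ovP_anti {η η' : ℝ} (h : η ≤ η') : ovP P φ η' ≤ ovP P φ η :=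
  P.pr_mono fun _ hx => h.trans_lt hx

lemma one_le_of_ovP_lt_one {η : ℝ} (h : ovP P φ η < 1) : 1 ≤ η := by
  by_contra! hη
  have huniv : {x | wlen (φ x) > η} = Set.univ :=
    Set.eq_univ_of_forall fun x => hη.trans_le (one_le_wlen _)
  rw [ovP, huniv, P.pr_univ] at h
  exact h.false

end Overflow

def listsOfLengthLE (K L : ℕ) : Finset (List (Fin K)) :=
  (Finset.range (L + 1)).biUnion fun k => Finset.univ.image (List.ofFn : (Fin k → Fin K) → _)

lemma mem_listsOfLengthLE {K L : ℕ} {l : List (Fin K)} (h : l.length ≤ L) :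
    l ∈ listsOfLengthLE K L :=
  Finset.mem_biUnion.2 ⟨l.length, Finset.mem_range.2 (Nat.lt_succ_of_le h),
    Finset.mem_image.2 ⟨l.get, Finset.mem_univ _, List.ofFn_get l⟩⟩

lemma card_listsOfLengthLE_lt {K : ℕ} (hK : 2 ≤ K) (L : ℕ) :
    (listsOfLengthLE K L).card < K ^ (L + 1) :=
  calc (listsOfLengthLE K L).card ≤ ∑ k ∈ Finset.range (L + 1), K ^ k :=
        Finset.card_biUnion_le.trans <| Finset.sum_le_sum fun k _ =>
          Finset.card_image_le.trans (by simp)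
    _ < K ^ (L + 1) := Nat.geomSum_lt hK fun _ hk => Finset.mem_range.1 hk

section OneShot

variable {α : Type*} {K : ℕ}

lemma Dist.pr_lt_le_errP_add_ovP (hK : 2 ≤ K) (P : Dist α) (φ : α → Word K) (ψ : Word K → α)
    {η c : ℝ} (hη : 0 ≤ η) (hc : 0 ≤ c) :
    P.pr {x | P.p x < c} ≤ errP P φ ψ + ovP P φ η + (K : ℝ) ^ (η + 1) * c := by
  set D := {x | ψ (φ x) = x ∧ wlen (φ x) ≤ η ∧ P.p x < c}
  have hinj : D.InjOn fun x => (φ x).1 := fun x hx y hy hxy => by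
    rw [← hx.1, ← hy.1, Subtype.ext hxy]
  have hmaps : D.MapsTo (fun x => (φ x).1) (listsOfLengthLE K ⌊η⌋₊) := fun x hx =>
    mem_listsOfLengthLE (Nat.le_floor hx.2.1)
  have hcard : ((listsOfLengthLE K ⌊η⌋₊).card : ℝ) ≤ (K : ℝ) ^ (η + 1) :=
    calc ((listsOfLengthLE K ⌊η⌋₊).card : ℝ) ≤ (K : ℝ) ^ ((⌊η⌋₊ + 1 : ℕ) : ℝ) := by
          rw [Real.rpow_natCast]; exact_mod_cast (card_listsOfLengthLE_lt hK _).le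
      _ ≤ (K : ℝ) ^ (η + 1) :=
          Real.rpow_le_rpow_of_exponent_le (by exact_mod_cast (by omega : 1 ≤ K))
            (by push_cast; linarith [Nat.floor_le hη])
  have hcover : {x | P.p x < c} ⊆ {x | ψ (φ x) ≠ x} ∪ {x | wlen (φ x) > η} ∪ D := by
    intro x hx
    by_cases h₁ : ψ (φ x) = x
    · by_cases h₂ : wlen (φ x) ≤ η
      · exact Or.inr ⟨h₁, h₂, hx⟩
      · exact Or.inl (Or.inr (not_le.1 h₂))
    · exact Or.inl (Or.inl h₁)
  calc P.pr {x | P.p x < c} ≤ errP P φ ψ + ovP P φ η + P.pr D :=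
        (P.pr_mono hcover).trans <| (P.pr_union_le _ _).trans <|
          add_le_add_left (P.pr_union_le _ _) _
    _ ≤ errP P φ ψ + ovP P φ η + (K : ℝ) ^ (η + 1) * c := by
        gcongr
        exact (P.pr_le_card_mul hinj hmaps (fun x hx => hx.2.2.le) hc).trans (by gcongr)

lemma Dist.pr_lt_le_pr_ne_add_mul (P : Dist α) {M : ℕ} (φ : α → Fin M) (ψ : Fin M → α) {c : ℝ}
    (hc : 0 ≤ c) : P.pr {x | P.p x < c} ≤ P.pr {x | ψ (φ x) ≠ x} + M * c := by
  set D := {x | ψ (φ x) = x ∧ P.p x < c}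
  have hD : P.pr D ≤ M * c := by
    simpa using P.pr_le_card_mul (T := Finset.univ) (Set.LeftInvOn.injOn fun x hx => hx.1)
      (fun x _ => Finset.mem_coe.2 (Finset.mem_univ (φ x))) (fun x hx => hx.2.le) hc
  have hcover : {x | P.p x < c} ⊆ {x | ψ (φ x) ≠ x} ∪ D := fun x hx => by
    by_cases h : ψ (φ x) = x
    exacts [Or.inr ⟨h, hx⟩, Or.inl h]
  exact (P.pr_mono hcover).trans ((P.pr_union_le _ _).trans (by gcongr))

lemma Dist.exists_fixedCode_pr_ne_le (P : Dist α) {M : ℕ} (hM : 0 < M) :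
    ∃ (φ : α → Fin M) (ψ : Fin M → α), P.pr {x | ψ (φ x) ≠ x} ≤ P.pr {x | P.p x < (M : ℝ)⁻¹} := by
  have := P.nonempty
  have : Nonempty (Fin M) := ⟨⟨0, hM⟩⟩
  have hA := P.encard_setOf_inv_le_le hM
  obtain ⟨φ, -, hinj⟩ := (Set.finite_of_encard_le_coe hA).exists_injOn_of_encard_le
    (t := (Set.univ : Set (Fin M))) (by simpa using hA)
  refine ⟨φ, Function.invFunOn φ {x | (M : ℝ)⁻¹ ≤ P.p x}, P.pr_mono fun x hx => ?_⟩
  by_contra h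
  exact hx (hinj.leftInvOn_invFunOn (show (M : ℝ)⁻¹ ≤ P.p x from not_lt.1 h))

lemma exists_wordCode_injOn [Countable α] (hK : 2 ≤ K) {A F : Set α} {L : ℕ}
    (hA : A.encard ≤ (K ^ L : ℕ)) :
    ∃ φ : α → Word K, (A ∪ F).InjOn φ ∧ ∀ x ∉ F, wlen (φ x) = L + 1 := by
  classical
  have : Nonempty (Fin L → Fin K) := ⟨fun _ => ⟨0, by omega⟩⟩
  obtain ⟨g, -, hg⟩ := (Set.finite_of_encard_le_coe hA).exists_injOn_of_encard_le
    (t := (Set.univ : Set (Fin L → Fin K))) (by simpa using hA)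
  obtain ⟨idx, hidx⟩ := exists_injective_nat α
  let φ : α → Word K := fun x =>
    if x ∈ F then ⟨⟨1, by omega⟩ :: List.replicate (idx x) ⟨0, by omega⟩, List.cons_ne_nil _ _⟩
    else ⟨⟨0, by omega⟩ :: List.ofFn (g x), List.cons_ne_nil _ _⟩
  refine ⟨φ, fun x hx y hy hxy => ?_, fun x hx => by simp [φ, hx, wlen]⟩
  by_cases hxF : x ∈ F <;> by_cases hyF : y ∈ F <;> simp [φ, hxF, hyF] at hxy
  · exact hidx hxy
  · exact hg (hx.resolve_right hxF) (hy.resolve_right hyF) hxy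

lemma Dist.exists_subset_pr_le_and_pr_diff_le [Countable α] (P : Dist α) {B : Set α} {c ε : ℝ}
    (hB : ∀ x ∈ B, P.p x ≤ c) (hc : 0 ≤ c) (hε : 0 ≤ ε) :
    ∃ E ⊆ B, P.pr E ≤ ε ∧ P.pr (B \ E) ≤ max (P.pr B - ε) 0 + c := by
  -- `E` is the longest initial segment of `B`, in the enumeration `idx`, of mass at most `ε`;
  -- the first point of `B` left out has mass at most `c`.
  obtain ⟨idx, hidx⟩ := exists_injective_nat α
  let I : α → Set α := fun x => {y | y ∈ B ∧ idx y ≤ idx x}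
  let E := {x | x ∈ B ∧ P.pr (I x) ≤ ε}
  refine ⟨E, fun x hx => hx.1, P.pr_le_of_forall_finset fun s hs => ?_, ?_⟩
  · rcases s.eq_empty_or_nonempty with rfl | hne
    · simpa [P.pr_empty] using hε
    obtain ⟨x₀, hx₀, hmax⟩ := s.exists_max_image idx hne
    refine (P.pr_mono (B := I x₀) fun y hy => ?_).trans (hs hx₀).2
    exact ⟨(hs hy).1, hmax y hy⟩
  rcases (B \ E).eq_empty_or_nonempty with h | hne
  · rw [h, P.pr_empty]
    positivity
  obtain ⟨x₀, ⟨hx₀B, hx₀E⟩, hmin⟩ := exists_minimalFor_of_wellFoundedLT (· ∈ B \ E) idx hne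
  have hsub : I x₀ ⊆ E ∪ {x₀} := by
    rintro y ⟨hyB, hy⟩
    by_cases hyx : y = x₀
    · exact Or.inr hyx
    · refine Or.inl (by_contra fun hyE => hyx (hidx (le_antisymm hy ?_)))
      exact hmin (show y ∈ B \ E from ⟨hyB, hyE⟩) hy
  have hεE : ε < P.pr E + c :=
    calc ε < P.pr (I x₀) := not_le.1 fun h => hx₀E ⟨hx₀B, h⟩
      _ ≤ P.pr E + P.p x₀ :=
          (P.pr_mono hsub).trans ((P.pr_union_le _ _).trans_eq (by rw [P.pr_singleton]))
      _ ≤ P.pr E + c := by gcongr; exact hB x₀ hx₀B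
  rw [P.pr_diff fun x hx => hx.1]
  linarith [le_max_left (P.pr B - ε) 0]

lemma Dist.exists_wordCode_errP_le [Countable α] (hK : 2 ≤ K) (P : Dist α) (L : ℕ) {ε : ℝ}
    (hε : 0 ≤ ε) :
    ∃ (φ : α → Word K) (ψ : Word K → α), errP P φ ψ ≤ ε ∧
      ovP P φ (L + 1) ≤ max (P.infoTail K L - ε) 0 + ((K : ℝ) ^ L)⁻¹ := by
  have := P.nonempty
  set c := ((K : ℝ) ^ L)⁻¹
  rw [P.infoTail_natCast]
  obtain ⟨E, -, hE, hBE⟩ := P.exists_subset_pr_le_and_pr_diff_le (B := {x | P.p x < c})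
    (fun x hx => le_of_lt hx) (by positivity) hε
  obtain ⟨φ, hinj, hlen⟩ := exists_wordCode_injOn hK (A := {x | c ≤ P.p x})
    (F := {x | P.p x < c} \ E)
    (by simpa [c] using P.encard_setOf_inv_le_le (M := K ^ L) (by positivity))
  have hS : Eᶜ ⊆ {x | c ≤ P.p x} ∪ ({x | P.p x < c} \ E) := fun x hx => by
    by_cases h : c ≤ P.p x
    exacts [Or.inl h, Or.inr ⟨not_le.1 h, hx⟩]
  refine ⟨φ, Function.invFunOn φ ({x | c ≤ P.p x} ∪ ({x | P.p x < c} \ E)), ?_, ?_⟩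
  · refine (P.pr_mono fun x hx => ?_).trans hE
    by_contra hxE
    exact hx (hinj.leftInvOn_invFunOn (hS hxE))
  · refine (P.pr_mono fun x hx => ?_).trans hBE
    by_contra hxF
    have := hlen x hxF
    simp only [Set.mem_ofPred_eq] at hx
    linarith

end OneShot

section Asymptotics

variable {𝒳 : Type*} {K : ℕ}

lemma liminf_infoTail_le_of_frequently_wordCode (hK : 2 ≤ K) (X : Source 𝒳) {a b : ℕ → ℝ}
    (hab : Tendsto (fun n => b n - a n) atTop atTop) {ε δ : ℝ} (hδ : δ < 1)
    (φ : ∀ n, (Fin n → 𝒳) → Word K) (ψ : ∀ n, Word K → (Fin n → 𝒳))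
    (h : ∃ᶠ n in atTop, errP (X n) (φ n) (ψ n) ≤ ε ∧ ovP (X n) (φ n) (a n) ≤ δ) :
    liminf (fun n => (X n).infoTail K (b n)) atTop ≤ ε + δ := by
  have hK' : (1 : ℝ) < K := by exact_mod_cast hK
  have hab' : Tendsto (fun n => b n - (a n + 1)) atTop atTop :=
    (tendsto_atTop_add_const_right _ (-1) hab).congr fun n => by ring
  refine liminf_le_of_frequently_le_add (isBoundedUnder_of ⟨0, fun n => (X n).pr_nonneg _⟩)
    (tendsto_rpow_mul_rpow_neg hK' hab') (h.mono fun n ⟨herr, hov⟩ => ?_)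
  have ha : 0 ≤ a n := zero_le_one.trans (one_le_of_ovP_lt_one _ _ (hov.trans_lt hδ))
  calc (X n).infoTail K (b n)
      ≤ errP (X n) (φ n) (ψ n) + ovP (X n) (φ n) (a n) + (K : ℝ) ^ (a n + 1) * (K : ℝ) ^ (-b n) :=
        (X n).pr_lt_le_errP_add_ovP hK (φ n) (ψ n) ha (by positivity)
    _ ≤ ε + δ + (K : ℝ) ^ (a n + 1) * (K : ℝ) ^ (-b n) := by gcongr

lemma liminf_infoTail_le_of_frequently_fixedCode (hK : 2 ≤ K) (X : Source 𝒳) {a b : ℕ → ℝ}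
    (hab : Tendsto (fun n => b n - a n) atTop atTop) {g : ℝ} {M : ℕ → ℕ}
    (φ : ∀ n, (Fin n → 𝒳) → Fin (M n)) (ψ : ∀ n, Fin (M n) → (Fin n → 𝒳))
    (h : ∃ᶠ n in atTop, (X n).pr {x | ψ n (φ n x) ≠ x} ≤ g ∧ Real.logb K (M n) ≤ a n) :
    liminf (fun n => (X n).infoTail K (b n)) atTop ≤ g := by
  have hK' : (1 : ℝ) < K := by exact_mod_cast hK
  refine liminf_le_of_frequently_le_add (isBoundedUnder_of ⟨0, fun n => (X n).pr_nonneg _⟩)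
    (tendsto_rpow_mul_rpow_neg hK' hab) (h.mono fun n ⟨herr, hM⟩ => ?_)
  have hM0 : (0 : ℝ) < M n := by exact_mod_cast (X n).pos_of_encoder (φ n)
  calc (X n).infoTail K (b n) ≤ (X n).pr {x | ψ n (φ n x) ≠ x} + M n * (K : ℝ) ^ (-b n) :=
        (X n).pr_lt_le_pr_ne_add_mul (φ n) (ψ n) (by positivity)
    _ ≤ g + (K : ℝ) ^ a n * (K : ℝ) ^ (-b n) := by
        gcongr
        exact (Real.logb_le_iff_le_rpow hK' hM0).1 hM

lemma frequently_infoTail_le_and_nonneg (hK : 1 < K) (X : Source 𝒳) {a : ℕ → ℝ} {g γ : ℝ}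
    (hg : g < 1) (hγ : 0 < γ) (h : liminf (fun n => (X n).infoTail K (a n)) atTop ≤ g) :
    ∃ᶠ n in atTop, (X n).infoTail K (a n) ≤ g + γ ∧ 0 ≤ a n := by
  have hτ : 0 < min γ (1 - g) := lt_min hγ (sub_pos.2 hg)
  refine (frequently_lt_of_liminf_lt (isCoboundedUnder_ge_of_le atTop fun n => (X n).pr_le_one _)
    (h.trans_lt (lt_add_of_pos_right g hτ))).mono
      fun n (hn : (X n).infoTail K (a n) < _) => ⟨?_, ?_⟩
  · linarith [min_le_left γ (1 - g)]
  · exact (X n).nonneg_of_infoTail_lt_one hK (by linarith [min_le_right γ (1 - g)])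

lemma exists_fixedCodes_of_liminf_infoTail_le (hK : 2 ≤ K) (X : Source 𝒳) {a b : ℕ → ℝ}
    (hab : Tendsto (fun n => b n - a n) atTop atTop) {g : ℝ} (hg : g < 1)
    (h : liminf (fun n => (X n).infoTail K (a n)) atTop ≤ g) :
    ∃ (M : ℕ → ℕ) (φ : ∀ n, (Fin n → 𝒳) → Fin (M n)) (ψ : ∀ n, Fin (M n) → (Fin n → 𝒳)),
      ∀ γ > (0 : ℝ), ∃ᶠ n in atTop,
        (X n).pr {x | ψ n (φ n x) ≠ x} ≤ g + γ ∧ Real.logb K (M n) ≤ b n := by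
  have hK' : (1 : ℝ) < K := by exact_mod_cast hK
  choose φ ψ hcode using fun n => (X n).exists_fixedCode_pr_ne_le (M := K ^ ⌊b n⌋₊) (by positivity)
  refine ⟨fun n => K ^ ⌊b n⌋₊, φ, ψ, fun γ hγ => ?_⟩
  refine ((frequently_infoTail_le_and_nonneg (by omega) X hg hγ h).and_eventually
    (hab.eventually_ge_atTop 1)).mono fun n ⟨⟨hspec, ha⟩, hgap⟩ => ⟨?_, ?_⟩
  · calc (X n).pr {x | ψ n (φ n x) ≠ x} ≤ (X n).infoTail K ⌊b n⌋₊ := by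
          simpa [Dist.infoTail_natCast] using hcode n
      _ ≤ (X n).infoTail K (a n) :=
          (X n).infoTail_anti (by omega) (by linarith [Nat.sub_one_lt_floor (b n)])
      _ ≤ g + γ := hspec
  · rw [Nat.cast_pow, Real.logb_pow, Real.logb_self_eq_one hK', mul_one]
    exact Nat.floor_le (by linarith)

lemma exists_wordCodes_of_liminf_infoTail_le [Countable 𝒳] (hK : 2 ≤ K) (X : Source 𝒳)
    {a b : ℕ → ℝ} (hab : Tendsto (fun n => b n - a n) atTop atTop) {ε δ : ℝ} (hε : 0 ≤ ε)
    (hδ : 0 ≤ δ) (hεδ : ε + δ < 1) (h : liminf (fun n => (X n).infoTail K (a n)) atTop ≤ ε + δ) :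
    ∃ (φ : ∀ n, (Fin n → 𝒳) → Word K) (ψ : ∀ n, Word K → (Fin n → 𝒳)),
      ∀ γ > (0 : ℝ), ∃ᶠ n in atTop,
        errP (X n) (φ n) (ψ n) ≤ ε + γ ∧ ovP (X n) (φ n) (b n) ≤ δ + γ := by
  have hK' : (1 : ℝ) < K := by exact_mod_cast hK
  -- Codeword lengths `L n + 1` with `L n` halfway between `a n` and `b n`: the rounding slack
  -- of `L n` is absorbed on both sides, and `L n → ∞` wherever `a n ≥ 0`.
  let L : ℕ → ℕ := fun n => ⌊(a n + b n) / 2⌋₊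
  choose φ ψ herr hov using fun n => (X n).exists_wordCode_errP_le hK (L n) hε
  refine ⟨φ, ψ, fun γ hγ => ?_⟩
  obtain ⟨N, hN⟩ := exists_pow_lt_of_lt_one (half_pos hγ) (inv_lt_one_of_one_lt₀ hK')
  refine ((frequently_infoTail_le_and_nonneg (by omega) X hεδ (half_pos hγ) h).and_eventually
    (hab.eventually_ge_atTop (2 * N + 2))).mono fun n ⟨⟨hspec, ha⟩, hgap⟩ =>
      ⟨(herr n).trans (by linarith), ?_⟩
  have hL := Nat.sub_one_lt_floor ((a n + b n) / 2)
  have hLm := Nat.floor_le (by linarith : 0 ≤ (a n + b n) / 2)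
  have hNL : N ≤ L n := by exact_mod_cast (show (N : ℝ) < L n by linarith).le
  have htail : (X n).infoTail K (L n) ≤ (X n).infoTail K (a n) :=
    (X n).infoTail_anti (by omega) (by linarith)
  have hc : ((K : ℝ) ^ L n)⁻¹ ≤ γ / 2 :=
    calc ((K : ℝ) ^ L n)⁻¹ ≤ ((K : ℝ) ^ N)⁻¹ := by gcongr; exact hK'.le
      _ ≤ γ / 2 := by rw [← inv_pow]; exact hN.le
  calc ovP (X n) (φ n) (b n) ≤ ovP (X n) (φ n) (L n + 1) := ovP_anti _ _ (by linarith)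
    _ ≤ max ((X n).infoTail K (L n) - ε) 0 + ((K : ℝ) ^ L n)⁻¹ := hov n
    _ ≤ max (δ + γ / 2) 0 + γ / 2 := by gcongr; linarith
    _ = δ + γ := by rw [max_eq_left (by positivity)]; ring

end Asymptotics

/-- `θ n v` is the length threshold (on codeword lengths, or on `log_K` of the codebook size) at
blocklength `n` for the parameter `v`: `n v` at first order and `n R + √n v` at second order. -/
structure IsThresholdScale (θ : ℕ → ℝ → ℝ) : Prop where
  mono : ∀ n, Monotone (θ n)
  tendsto_sub : ∀ v {γ : ℝ}, 0 < γ → Tendsto (fun n => θ n (v + γ) - θ n v) atTop atTop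

lemma isThresholdScale_first : IsThresholdScale fun n v => (n : ℝ) * v where
  mono n _ _ h := mul_le_mul_of_nonneg_left h n.cast_nonneg
  tendsto_sub v γ hγ := (tendsto_natCast_atTop_atTop.atTop_mul_const hγ).congr fun n => by ring

lemma isThresholdScale_second (R : ℝ) : IsThresholdScale fun n v => (n : ℝ) * R + √(n : ℝ) * v where
  mono n _ _ h := add_le_add_right (mul_le_mul_of_nonneg_left h (Real.sqrt_nonneg _)) _
  tendsto_sub v γ hγ :=
    ((Real.tendsto_sqrt_atTop.comp tendsto_natCast_atTop_atTop).atTop_mul_const hγ).congr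
      fun n => by simp only [Function.comp_apply]; ring

section Achievability

variable {𝒳 : Type*} {K : ℕ}

def VarLenAch (K : ℕ) (X : Source 𝒳) (ε δ : ℝ) (θ : ℕ → ℝ → ℝ) (v : ℝ) : Prop :=
  ∃ (φ : ∀ n, (Fin n → 𝒳) → Word K) (ψ : ∀ n, Word K → (Fin n → 𝒳)),
    ∀ γ > (0 : ℝ), ∃ᶠ n in atTop,
      errP (X n) (φ n) (ψ n) ≤ ε + γ ∧ ovP (X n) (φ n) (θ n v) ≤ δ + γ

def FixLenAch (K : ℕ) (X : Source 𝒳) (ε : ℝ) (θ : ℕ → ℝ → ℝ) (v : ℝ) : Prop :=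
  ∃ (M : ℕ → ℕ) (φ : ∀ n, (Fin n → 𝒳) → Fin (M n)) (ψ : ∀ n, Fin (M n) → (Fin n → 𝒳)),
    ∀ γ > (0 : ℝ), ∃ᶠ n in atTop,
      (X n).pr {x | ψ n (φ n x) ≠ x} ≤ ε + γ ∧ Real.logb K (M n) ≤ θ n (v + γ)

lemma sInf_varLenAch_eq [Countable 𝒳] (hK : 2 ≤ K) (X : Source 𝒳) {θ : ℕ → ℝ → ℝ}
    (hθ : IsThresholdScale θ) {ε δ : ℝ} (hε : 0 ≤ ε) (hδ : 0 ≤ δ) (hεδ : ε + δ < 1) :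
    sInf {v | VarLenAch K X ε δ θ v} =
      sInf {v | liminf (fun n => (X n).infoTail K (θ n v)) atTop ≤ ε + δ} := by
  refine sInf_eq_of_forall_add_mem (fun v ⟨φ, ψ, h⟩ γ hγ => ?_)
    fun v hv γ hγ => exists_wordCodes_of_liminf_infoTail_le hK X (hθ.tendsto_sub v hγ) hε hδ hεδ hv
  rw [Set.mem_ofPred_eq]
  refine le_of_forall_pos_le_add fun τ hτ => ?_
  have hτ' : 0 < min (τ / 2) ((1 - δ) / 2) := lt_min (by linarith) (by linarith)
  have := liminf_infoTail_le_of_frequently_wordCode hK X (hθ.tendsto_sub v hγ)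
    (by linarith [min_le_right (τ / 2) ((1 - δ) / 2)]) φ ψ (h _ hτ')
  linarith [min_le_left (τ / 2) ((1 - δ) / 2)]

lemma sInf_fixLenAch_eq (hK : 2 ≤ K) (X : Source 𝒳) {θ : ℕ → ℝ → ℝ} (hθ : IsThresholdScale θ)
    {g : ℝ} (hg : g < 1) :
    sInf {v | FixLenAch K X g θ v} =
      sInf {v | liminf (fun n => (X n).infoTail K (θ n v)) atTop ≤ g} := by
  refine sInf_eq_of_forall_add_mem (fun v ⟨M, φ, ψ, h⟩ γ hγ => ?_) fun v hv γ hγ => ?_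
  · rw [Set.mem_ofPred_eq]
    refine le_of_forall_pos_le_add fun τ hτ => ?_
    set γ' := min τ (γ / 2)
    have hγ' : 0 < γ' := lt_min hτ (half_pos hγ)
    have hgap := hθ.tendsto_sub (v + γ') (show 0 < γ - γ' by linarith [min_le_right τ (γ / 2)])
    rw [add_add_sub_cancel] at hgap
    exact liminf_infoTail_le_of_frequently_fixedCode hK X hgap φ ψ
      ((h γ' hγ').mono fun n hn => ⟨hn.1.trans (by linarith [min_le_left τ (γ / 2)]), hn.2⟩)
  · obtain ⟨M, φ, ψ, h⟩ := exists_fixedCodes_of_liminf_infoTail_le hK X (hθ.tendsto_sub v hγ) hg hv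
    exact ⟨M, φ, ψ, fun γ' hγ' =>
      (h γ' hγ').mono fun n hn => ⟨hn.1, hn.2.trans (hθ.mono n (by linarith))⟩⟩

lemma nonneg_of_varLenAch_first (X : Source 𝒳) {ε δ R : ℝ} (hδ : δ < 1)
    (h : VarLenAch K X ε δ (fun n v => (n : ℝ) * v) R) : 0 ≤ R := by
  by_contra! hR
  obtain ⟨φ, ψ, h⟩ := h
  obtain ⟨n, -, hov⟩ := (h ((1 - δ) / 2) (by linarith)).exists
  have := one_le_of_ovP_lt_one _ _ (hov.trans_lt (by linarith))
  nlinarith [(n.cast_nonneg : (0 : ℝ) ≤ n)]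

lemma optFirstAch_iff (X : Source 𝒳) (ε δ R : ℝ) :
    OptFirstAch K X ε δ R ↔ 0 ≤ R ∧ VarLenAch K X ε δ (fun n v => (n : ℝ) * v) R := by
  simp only [VarLenAch, frequently_atTop_iff_exists_strictMono]
  rfl

lemma roptStar_eq_sInf_varLenAch (X : Source 𝒳) {ε δ : ℝ} (hδ : δ < 1) :
    RoptStar K X ε δ = sInf {v | VarLenAch K X ε δ (fun n v => (n : ℝ) * v) v} :=
  congrArg sInf <| Set.ext fun R =>
    (optFirstAch_iff X ε δ R).trans (and_iff_right_of_imp (nonneg_of_varLenAch_first X hδ))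

lemma loptStar_eq_sInf_varLenAch (X : Source 𝒳) (ε δ R : ℝ) :
    LoptStar K X ε δ R =
      sInf {v | VarLenAch K X ε δ (fun n v => (n : ℝ) * R + √(n : ℝ) * v) v} := by
  simp only [LoptStar, VarLenAch, frequently_atTop_iff_exists_strictMono]
  rfl

lemma rfix_eq_sInf_fixLenAch (X : Source 𝒳) (g : ℝ) :
    Rfix K X g = sInf {v | FixLenAch K X g (fun n v => (n : ℝ) * v) v} := by
  refine congrArg sInf (Set.ext fun R => exists₃_congr fun M φ ψ => forall₂_congr fun γ _ => ?_)
  rw [← frequently_atTop_iff_exists_strictMono (P := fun n =>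
    (X n).pr {x | ψ n (φ n x) ≠ x} ≤ g + γ ∧ Real.logb K (M n) / n ≤ R + γ)]
  refine frequently_congr ((eventually_gt_atTop 0).mono fun n hn => and_congr_right' ?_)
  rw [div_le_iff₀ (by exact_mod_cast hn), mul_comm]

lemma lfix_eq_sInf_fixLenAch (hK : 1 < K) (X : Source 𝒳) (g R : ℝ) :
    Lfix K X g R = sInf {v | FixLenAch K X g (fun n v => (n : ℝ) * R + √(n : ℝ) * v) v} := by
  refine congrArg sInf (Set.ext fun L => exists₃_congr fun M φ ψ => forall₂_congr fun γ _ => ?_)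
  rw [← frequently_atTop_iff_exists_strictMono (P := fun n =>
    (X n).pr {x | ψ n (φ n x) ≠ x} ≤ g + γ ∧
      Real.logb K (M n / (K : ℝ) ^ ((n : ℝ) * R)) / √(n : ℝ) ≤ L + γ)]
  refine frequently_congr ((eventually_gt_atTop 0).mono fun n hn => and_congr_right' ?_)
  have hM : (0 : ℝ) < M n := by exact_mod_cast (X n).pos_of_encoder (φ n)
  have hK' : (1 : ℝ) < K := by exact_mod_cast hK
  rw [Real.logb_div hM.ne' (by positivity), Real.logb_rpow (by positivity) hK'.ne',
    div_le_iff₀ (Real.sqrt_pos.2 (by exact_mod_cast hn)), sub_le_iff_le_add',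
    mul_comm (L + γ)]

lemma hbarStar_eq_sInf_liminf_infoTail (hK : 1 < K) (X : Source 𝒳) (g : ℝ) :
    HbarStar K X g = sInf {v | liminf (fun n => (X n).infoTail K (n * v)) atTop ≤ g} := by
  refine congrArg sInf (Set.ext fun v => ?_)
  rw [Set.mem_ofPred_eq, Set.mem_ofPred_eq, liminf_congr ((eventually_gt_atTop 0).mono fun n hn =>
    (X n).pr_logb_div_gt hK hn v)]

lemma hbar2Star_eq_sInf_liminf_infoTail (hK : 1 < K) (X : Source 𝒳) (g R : ℝ) :
    Hbar2Star K X g R =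
      sInf {v | liminf (fun n => (X n).infoTail K (n * R + √(n : ℝ) * v)) atTop ≤ g} := by
  refine congrArg sInf (Set.ext fun v => ?_)
  rw [Set.mem_ofPred_eq, Set.mem_ofPred_eq, liminf_congr ((eventually_gt_atTop 0).mono fun n hn =>
    ((X n).pr_logb_div_gt hK hn _).trans ?_)]
  rw [mul_add, mul_div_assoc', mul_div_right_comm, Real.div_sqrt]

end Achievability

theorem statement17_general {𝒳 : Type*} [Countable 𝒳] (K : ℕ) (hK : 2 ≤ K) (X : Source 𝒳)
    (R ε δ : ℝ)
    (hε0 : 0 ≤ ε) (hδ0 : 0 ≤ δ) (hεδ : ε + δ < 1) :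
    RoptStar K X ε δ = Rfix K X (ε + δ) ∧
    Rfix K X (ε + δ) = HbarStar K X (ε + δ) ∧
    LoptStar K X ε δ R = Lfix K X (ε + δ) R ∧
    Lfix K X (ε + δ) R = Hbar2Star K X (ε + δ) R := by
  have hK1 : 1 < K := by omega
  rw [roptStar_eq_sInf_varLenAch X (by linarith), loptStar_eq_sInf_varLenAch,
    rfix_eq_sInf_fixLenAch, lfix_eq_sInf_fixLenAch hK1,
    hbarStar_eq_sInf_liminf_infoTail hK1, hbar2Star_eq_sInf_liminf_infoTail hK1,
    sInf_varLenAch_eq hK X isThresholdScale_first hε0 hδ0 hεδ,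
    sInf_varLenAch_eq hK X (isThresholdScale_second R) hε0 hδ0 hεδ,
    sInf_fixLenAch_eq hK X isThresholdScale_first hεδ,
    sInf_fixLenAch_eq hK X (isThresholdScale_second R) hεδ]
  exact ⟨rfl, rfl, rfl, rfl⟩

/-- relation to optimistic fixed-length source coding. -/
theorem statement17 {𝒳 : Type*} [Countable 𝒳] (K : ℕ) (hK : 2 ≤ K) (X : Source 𝒳)
    (R ε δ : ℝ) (hR : 0 ≤ R)
    (hε0 : 0 ≤ ε) (hε1 : ε < 1) (hδ0 : 0 ≤ δ) (hδ1 : δ < 1) (hεδ : ε + δ < 1) :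
    RoptStar K X ε δ = Rfix K X (ε + δ) ∧
    Rfix K X (ε + δ) = HbarStar K X (ε + δ) ∧
    LoptStar K X ε δ R = Lfix K X (ε + δ) R ∧
    Lfix K X (ε + δ) R = Hbar2Star K X (ε + δ) R :=
  statement17_general K hK X R ε δ hε0 hδ0 hεδ
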